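/- arXiv:math/0407086 — 3 statements merged into one kernel-verified Lean document; each statement's English description precedes it below -/
import Mathlib

section
/- In ℤ^n with the Weil-Petersson form σ of an ideal triangulation λ of a surface with p punctures, the kernel Ker σ = {α : ∀β, σ(α,β) = 0} is the free abelian subgroup of rank p generated by the vector (1,1,…,1) and the vectors (k_{i1},…,k_{in}) for i = 1,…,p-1, where k_{ij} ∈ {0,1,2} is the number of ends of the edge λ_j converging to the i-th puncture. -/
/-- A combinatorial model (oriented combinatorial map) of an ideal triangulation of a closed
orientable surface of genus `g` with `p` punctures, having `n` edges.  The darts `D` are the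
corners (spikes) of the triangles; `φ` is the rotation moving counterclockwise to the next
corner of the same triangle (faces are triangles), `α` is the fixed-point-free involution
pairing the two sides of each edge, `edge` labels each dart by the edge of the triangulation
on its left, and `vert` records the puncture towards which the spike converges (orbits of the
vertex rotation `φ ∘ α`).  Connectivity and the Euler relation `p - n + F = 2 - 2g` make this
the triangulation of the genus `g` surface with `p` punctures. -/
structure IdealTriangulation (g p n : ℕ) where
  D : Type
  [fintypeD : Fintype D]
  [decEqD : DecidableEq D]
  α : Equiv.Perm D
  φ : Equiv.Perm D
  α_invol : ∀ d, α (α d) = d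
  α_fpf : ∀ d, α d ≠ d
  φ_triangles : ∀ d, φ (φ (φ d)) = d
  φ_fpf : ∀ d, φ d ≠ d
  edge : D → Fin n
  edge_surj : Function.Surjective edge
  edge_fiber : ∀ d d', edge d = edge d' ↔ (d' = d ∨ d' = α d)
  vert : D → Fin p
  vert_surj : Function.Surjective vert
  vert_rot : ∀ d, vert (φ (α d)) = vert d
  vert_orbit : ∀ d d', vert d = vert d' → ∃ k : ℕ, ((α.trans φ) ^ k) d = d'
  connected : ∀ d d', ∃ w ∈ Subgroup.closure ({α, φ} : Set (Equiv.Perm D)), w d = d'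
  card_darts : Fintype.card D = 2 * n
  euler : (p : ℤ) - (n : ℤ) + (Fintype.card D : ℤ) / 3 = 2 - 2 * (g : ℤ)

attribute [instance] IdealTriangulation.fintypeD IdealTriangulation.decEqD

/-- The number `a_ij` of spikes delimited on the left by edge `i` and on the right by
edge `j`. -/
noncomputable def IdealTriangulation.spikeCount {g p n : ℕ} (T : IdealTriangulation g p n)
    (i j : Fin n) : ℕ :=
  (Finset.univ.filter (fun d => T.edge d = i ∧ T.edge (T.φ d) = j)).card

/-- The Weil–Petersson matrix `σ_ij = a_ij - a_ji` of an ideal triangulation. -/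
noncomputable def IdealTriangulation.wpMatrix {g p n : ℕ} (T : IdealTriangulation g p n) :
    Matrix (Fin n) (Fin n) ℤ :=
  Matrix.of fun i j => (T.spikeCount i j : ℤ) - (T.spikeCount j i : ℤ)


/-- The bilinear Weil–Petersson form `σ(α, β) = Σ_{i,j} α_i σ_ij β_j` on `ℤⁿ`. -/
noncomputable def IdealTriangulation.wpForm {g p n : ℕ} (T : IdealTriangulation g p n)
    (x y : Fin n → ℤ) : ℤ :=
  ∑ i : Fin n, ∑ j : Fin n, x i * T.wpMatrix i j * y j

/-- `k_{ij} ∈ {0,1,2}` is the number of ends of the edge `λ_j` converging to the `i`-th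
puncture. -/
noncomputable def IdealTriangulation.endCount {g p n : ℕ} (T : IdealTriangulation g p n)
    (i : Fin p) (j : Fin n) : ℕ :=
  (Finset.univ.filter (fun d => T.vert d = i ∧ T.edge d = j)).card

/-- The family of `p` vectors generating the kernel of the Weil–Petersson form:
the vectors `(k_{i1}, …, k_{in})` for `i = 1, …, p-1` together with `(1, 1, …, 1)`. -/
noncomputable def IdealTriangulation.kerGens {g p n : ℕ} (T : IdealTriangulation g p n)
    (i : Fin p) : Fin n → ℤ :=
  if i.val + 1 < p then (fun j => (T.endCount i j : ℤ)) else (fun _ => 1)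

/-!
A vector `x` lies in `Ker σ` iff, for every edge, the values of `x` on the two edges following
it in the adjacent triangles balance those on the two edges preceding it. Vectors of the form
`x(λ) = c + u(first end of λ) + u(second end of λ)`, i.e. `c·(1,…,1) + Σ uᵢ kᵢ`, satisfy this.
Conversely, for `x ∈ Ker σ` the quantity `x(λ_d) + x(λ_{φ²d}) - x(λ_{φd})` attached to a spike `d`
is invariant under rotation about the puncture of `d`, hence a function `v` of the puncture, and
`2 x(λ) = v(first end) + v(second end)`. So `v` has constant parity along edges, hence everywhere
by connectivity, and `c = v(last)`, `u = (v - v(last)) / 2` do the job. For independence, the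
relations `c + u_a + u_b = 0` along the three sides of a triangle force `2 u = -c` at every
puncture, while `u` vanishes at the last one.
-/

open Finset Matrix

theorem Finset.sum_mul_card_filter_and {ι κ R : Type*} [Fintype ι] [Fintype κ] [DecidableEq κ]
    [CommSemiring R] (g : ι → κ) (P : ι → Prop) [DecidablePred P] (x : κ → R) :
    ∑ j, x j * (#{i | g i = j ∧ P i} : R) = ∑ i with P i, x (g i) := by
  rw [← sum_fiberwise' _ g x]
  refine sum_congr rfl fun j _ => ?_
  rw [sum_const, nsmul_eq_mul, mul_comm, filter_filter]
  simp_rw [and_comm]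

theorem Equiv.Perm.comp_eq_of_mem_closure {α β : Type*} {f : α → β} {S : Set (Perm α)}
    (hS : ∀ σ ∈ S, f ∘ σ = f) {w : Perm α} (hw : w ∈ Subgroup.closure S) : f ∘ w = f := by
  induction hw using Subgroup.closure_induction with
  | mem σ hσ => exact hS σ hσ
  | one => rfl
  | mul a b _ _ ha hb => rw [coe_mul, ← Function.comp_assoc, ha, hb]
  | inv a _ ha => funext x; simpa using (congrFun ha (a⁻¹ x)).symm

namespace IdealTriangulation

section

variable {g p n : ℕ} (T : IdealTriangulation g p n)

theorem edge_alpha (d : T.D) : T.edge (T.α d) = T.edge d :=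
  ((T.edge_fiber d (T.α d)).mpr (Or.inr rfl)).symm

theorem vert_phi (d : T.D) : T.vert (T.φ d) = T.vert (T.α d) := by
  simpa only [T.α_invol] using T.vert_rot (T.α d)

theorem phi_symm_apply (d : T.D) : T.φ.symm d = T.φ (T.φ d) :=
  T.φ.symm_apply_eq.mpr (T.φ_triangles d).symm

theorem sum_filter_edge_eq {M : Type*} [AddCommMonoid M] (F : T.D → M) (e : T.D) :
    ∑ d with T.edge d = T.edge e, F d = F e + F (T.α e) := by
  have hfiber : ({d | T.edge d = T.edge e} : Finset T.D) = {e, T.α e} := by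
    ext d
    simp only [mem_filter, mem_univ, true_and, T.edge_fiber, mem_insert, mem_singleton]
    constructor
    · rintro (rfl | rfl) <;> simp [T.α_invol]
    · rintro (rfl | rfl) <;> simp [T.α_invol]
  rw [hfiber, sum_pair (T.α_fpf e).symm]

theorem sum_filter_edge_phi_eq {M : Type*} [AddCommMonoid M] (F : T.D → M) (e : T.D) :
    ∑ d with T.edge (T.φ d) = T.edge e, F d = F (T.φ (T.φ e)) + F (T.φ (T.φ (T.α e))) := by
  rw [sum_filter, ← T.φ.symm.sum_comp]
  simp only [Equiv.apply_symm_apply, ← sum_filter]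
  simpa only [Function.comp_apply, T.phi_symm_apply] using T.sum_filter_edge_eq (F ∘ T.φ.symm) e

theorem vecMul_wpMatrix_edge (x : Fin n → ℤ) (e : T.D) :
    (x ᵥ* T.wpMatrix) (T.edge e)
      = x (T.edge (T.φ (T.φ e))) + x (T.edge (T.φ (T.φ (T.α e))))
        - (x (T.edge (T.φ e)) + x (T.edge (T.φ (T.α e)))) := by
  have hin : ∑ i, x i * (T.spikeCount i (T.edge e) : ℤ)
      = ∑ d with T.edge (T.φ d) = T.edge e, x (T.edge d) :=
    sum_mul_card_filter_and _ _ _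
  have hout : ∑ i, x i * (T.spikeCount (T.edge e) i : ℤ)
      = ∑ d with T.edge d = T.edge e, x (T.edge (T.φ d)) := by
    simp_rw [spikeCount, and_comm (a := T.edge _ = T.edge e)]
    exact sum_mul_card_filter_and _ _ _
  simp only [vecMul, dotProduct, wpMatrix, Matrix.of_apply, mul_sub, sum_sub_distrib, hin, hout,
    T.sum_filter_edge_eq, T.sum_filter_edge_phi_eq]

theorem wpForm_eq_vecMul_dotProduct (x y : Fin n → ℤ) : T.wpForm x y = (x ᵥ* T.wpMatrix) ⬝ᵥ y := by
  simp only [wpForm, vecMul, dotProduct, sum_mul]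
  exact sum_comm

theorem forall_wpForm_eq_zero_iff (x : Fin n → ℤ) :
    (∀ y, T.wpForm x y = 0) ↔ ∀ e, x (T.edge (T.φ (T.φ e))) + x (T.edge (T.φ (T.φ (T.α e))))
      = x (T.edge (T.φ e)) + x (T.edge (T.φ (T.α e))) := by
  simp only [wpForm_eq_vecMul_dotProduct, dotProduct_eq_zero_iff, funext_iff,
    T.edge_surj.forall, vecMul_wpMatrix_edge, Pi.zero_apply, sub_eq_zero]

theorem forall_wpForm_eq_zero_of_edge_eq {x : Fin n → ℤ} (c : ℤ) (u : Fin p → ℤ)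
    (hx : ∀ d, x (T.edge d) = c + u (T.vert d) + u (T.vert (T.α d))) :
    ∀ y, T.wpForm x y = 0 := by
  have hvert : ∀ d, T.vert (T.α (T.φ (T.φ d))) = T.vert d := fun d => by
    rw [← T.vert_phi, T.φ_triangles]
  refine (T.forall_wpForm_eq_zero_iff x).mpr fun e => ?_
  simp only [hx, hvert, T.vert_phi, T.α_invol]
  ring

theorem exists_vert_factorization {β : Type*} (G : T.D → β) (hG : ∀ d, G (T.φ (T.α d)) = G d) :
    ∃ u : Fin p → β, ∀ d, G d = u (T.vert d) := by
  refine ⟨fun i => G (Function.surjInv T.vert_surj i), fun d => ?_⟩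
  obtain ⟨k, hk⟩ := T.vert_orbit d _ (Function.surjInv_eq T.vert_surj (T.vert d)).symm
  have hpow : G ∘ ⇑((T.α.trans T.φ) ^ k) = G :=
    Equiv.Perm.comp_eq_of_mem_closure (by rintro σ rfl; exact funext hG)
      (pow_mem (Subgroup.subset_closure rfl) k)
  simpa only [Function.comp_apply, hk] using (congrFun hpow d).symm

theorem apply_eq_of_forall_alpha_phi {β : Type*} {f : T.D → β} (hα : ∀ d, f (T.α d) = f d)
    (hφ : ∀ d, f (T.φ d) = f d) (d d' : T.D) : f d = f d' := by
  obtain ⟨w, hw, rfl⟩ := T.connected d' d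
  refine congrFun (Equiv.Perm.comp_eq_of_mem_closure ?_ hw) d'
  rintro σ (rfl | rfl) <;> funext <;> simp [hα, hφ]

theorem exists_edge_eq_of_forall_wpForm_eq_zero {x : Fin n → ℤ} (hx : ∀ y, T.wpForm x y = 0)
    (i₀ : Fin p) : ∃ (c : ℤ) (u : Fin p → ℤ),
      u i₀ = 0 ∧ ∀ d, x (T.edge d) = c + u (T.vert d) + u (T.vert (T.α d)) := by
  rw [forall_wpForm_eq_zero_iff] at hx
  -- for `x(λ_d) = c + u(vert d) + u(vert (α d))` this function is `d ↦ c + 2 u(vert d)`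
  obtain ⟨v, hv⟩ := T.exists_vert_factorization
    (fun d => x (T.edge d) + x (T.edge (T.φ (T.φ d))) - x (T.edge (T.φ d))) fun d => by
      simp only [T.φ_triangles, T.edge_alpha]
      linarith [hx d]
  have two_mul_edge : ∀ d, 2 * x (T.edge d) = v (T.vert d) + v (T.vert (T.α d)) := fun d => by
    rw [← hv, ← T.vert_phi, ← hv, T.φ_triangles]
    ring
  have parity : ∀ d, v (T.vert d) % 2 = v i₀ % 2 := by
    obtain ⟨d₀, rfl⟩ := T.vert_surj i₀
    refine fun d => T.apply_eq_of_forall_alpha_phi (f := fun d => v (T.vert d) % 2)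
      (fun d => ?_) (fun d => ?_) d d₀
    · have := two_mul_edge d
      omega
    · have := two_mul_edge d
      rw [T.vert_phi]
      omega
  refine ⟨v i₀, fun i => (v i - v i₀) / 2, by simp, fun d => ?_⟩
  dsimp only
  have := parity d
  have := parity (T.α d)
  have := two_mul_edge d
  omega

theorem two_mul_vert_eq_neg_of_edge_eq_zero {c : ℤ} {u : Fin p → ℤ}
    (h : ∀ d, c + u (T.vert d) + u (T.vert (T.α d)) = 0) (d : T.D) : 2 * u (T.vert d) = -c := by
  have h₁ := h d
  have h₂ := h (T.φ d)
  have h₃ := h (T.φ (T.φ d))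
  rw [← T.vert_phi] at h₁ h₂ h₃
  rw [T.φ_triangles] at h₃
  linarith

theorem sum_mul_endCount_edge (u : Fin p → ℤ) (e : T.D) :
    ∑ i, u i * (T.endCount i (T.edge e) : ℤ) = u (T.vert e) + u (T.vert (T.α e)) :=
  (sum_mul_card_filter_and _ _ _).trans (T.sum_filter_edge_eq (u ∘ T.vert) e)

end

section

variable {g m n : ℕ} (T : IdealTriangulation g (m + 1) n)

theorem kerGens_last : T.kerGens (Fin.last m) = fun _ => 1 := by
  simp [kerGens]

theorem kerGens_of_ne_last {i : Fin (m + 1)} (hi : i ≠ Fin.last m) :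
    T.kerGens i = fun j => (T.endCount i j : ℤ) := by
  simp [kerGens, Fin.val_lt_last hi]

theorem sum_smul_kerGens_edge (v : Fin (m + 1) → ℤ) (e : T.D) :
    (∑ i, v i • T.kerGens i) (T.edge e) = v (Fin.last m)
      + Function.update v (Fin.last m) 0 (T.vert e)
      + Function.update v (Fin.last m) 0 (T.vert (T.α e)) := by
  have hterm : ∀ i, v i * T.kerGens i (T.edge e)
      = Function.update v (Fin.last m) 0 i * T.endCount i (T.edge e)
        + if i = Fin.last m then v (Fin.last m) else 0 := fun i => by
    by_cases hi : i = Fin.last m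
    · simp [hi, kerGens_last]
    · simp [hi, T.kerGens_of_ne_last hi]
  simp only [Finset.sum_apply, Pi.smul_apply, smul_eq_mul, hterm, sum_add_distrib, sum_ite_eq',
    mem_univ, if_true, sum_mul_endCount_edge]
  ring

theorem linearIndependent_kerGens : LinearIndependent ℤ T.kerGens := by
  rw [Fintype.linearIndependent_iff]
  intro v hv
  have hw := T.two_mul_vert_eq_neg_of_edge_eq_zero fun d => by
    rw [← sum_smul_kerGens_edge, hv, Pi.zero_apply]
  obtain ⟨d₀, hd₀⟩ := T.vert_surj (Fin.last m)
  have hlast : v (Fin.last m) = 0 := by simpa [hd₀] using hw d₀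
  intro i
  obtain ⟨d, rfl⟩ := T.vert_surj i
  by_cases hi : T.vert d = Fin.last m
  · rw [hi, hlast]
  · simpa [hi, hlast] using hw d

theorem mem_span_kerGens_iff (x : Fin n → ℤ) :
    x ∈ Submodule.span ℤ (Set.range T.kerGens) ↔ ∀ y, T.wpForm x y = 0 := by
  rw [Submodule.mem_span_range_iff_exists_fun]
  constructor
  · rintro ⟨v, rfl⟩
    exact T.forall_wpForm_eq_zero_of_edge_eq _ _ (T.sum_smul_kerGens_edge v)
  · intro hx
    obtain ⟨c, u, hu, hxu⟩ := T.exists_edge_eq_of_forall_wpForm_eq_zero hx (Fin.last m)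
    refine ⟨Function.update u (Fin.last m) c, funext fun j => ?_⟩
    obtain ⟨e, rfl⟩ := T.edge_surj j
    rw [sum_smul_kerGens_edge, hxu, Function.update_idem, Function.update_self,
      Function.update_eq_self_iff.mpr hu.symm]

end

end IdealTriangulation

/-- In `ℤⁿ` with the Weil–Petersson form `σ` of an ideal triangulation `λ` of a
surface with `p` punctures, the kernel `Ker σ = {α : ∀ β, σ(α,β) = 0}` is the free abelian
subgroup of rank `p` generated by the vector `(1,1,…,1)` and the vectors `(k_{i1},…,k_{in})`
for `i = 1, …, p-1`, where `k_{ij}` is the number of ends of `λ_j` at the `i`-th puncture. -/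
theorem wpForm_kernel (g p n : ℕ) (hp : 1 ≤ p) (T : IdealTriangulation g p n) :
    LinearIndependent ℤ T.kerGens ∧
      (Submodule.span ℤ (Set.range T.kerGens) : Set (Fin n → ℤ))
        = {x : Fin n → ℤ | ∀ y : Fin n → ℤ, T.wpForm x y = 0} := by
  obtain ⟨m, rfl⟩ := Nat.exists_eq_add_of_le' hp
  exact ⟨T.linearIndependent_kerGens, Set.ext T.mem_span_kerGens_iff⟩
end

section
/- Let q² be a primitive N-th root of unity and let 𝒲^q be the algebra generated by U^{±1}, V^{±1} with UV = q²VU. Every finite-dimensional irreducible representation of 𝒲^q has dimension N and is isomorphic to ρ_{uv} for some u, v ∈ ℂ*; moreover ρ_{uv} ≅ ρ_{u'v'} if and only if u^N = (u')^N and v^N = (v')^N. -/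
/-!
`V^N` is central in `𝒲^q`, so by Schur's lemma it acts on an irreducible representation as a
scalar `c ≠ 0`; pick `v` with `v^N = c`. Starting from an eigenvector `w` of `U` (eigenvalue `u`),
the vectors `(v⁻¹ V)^k w`, `k < N`, are eigenvectors of `U` with the pairwise distinct eigenvalues
`u q^{2k}`, and `(v⁻¹ V)^N w = w`. In this basis `U` and `V` act by `ρ_{uv}`, and the span is
invariant, hence everything. For the isomorphism criterion, `U^N` and `V^N` act on `ρ_{uv}` by the
scalars `u^N`, `v^N`, which conjugation preserves; conversely, if `u^N = u'^N` then `u` is an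
eigenvalue `u' q^{2s}` of `ρ_{u'v'}(U)`, and the same cyclic construction inside `ρ_{u'v'}` with
this `u` and `v` gives the isomorphism.
-/

open FreeAlgebra in
/-- The defining relations of the quantum torus `𝒲^q` in two variables: generators
`U` (index 0), `U⁻¹` (index 1), `V` (index 2), `V⁻¹` (index 3), subject to
`U V = q² V U` and the invertibility relations. -/
inductive WRel (q : ℂ) : FreeAlgebra ℂ (Fin 4) → FreeAlgebra ℂ (Fin 4) → Prop
  | comm : WRel q (ι ℂ 0 * ι ℂ 2) ((q ^ 2 : ℂ) • (ι ℂ 2 * ι ℂ 0))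
  | U_Uinv : WRel q (ι ℂ 0 * ι ℂ 1) 1
  | Uinv_U : WRel q (ι ℂ 1 * ι ℂ 0) 1
  | V_Vinv : WRel q (ι ℂ 2 * ι ℂ 3) 1
  | Vinv_V : WRel q (ι ℂ 3 * ι ℂ 2) 1

/-- The quantum torus `𝒲^q`: the `ℂ`-algebra generated by `U^{±1}`, `V^{±1}` with the
relation `U V = q² V U`. -/
abbrev WeylAlgebra (q : ℂ) := RingQuot (WRel q)

/-- The generator `U` of `𝒲^q`. -/
noncomputable def WeylAlgebra.U (q : ℂ) : WeylAlgebra q :=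
  RingQuot.mkAlgHom ℂ (WRel q) (FreeAlgebra.ι ℂ 0)

/-- The generator `V` of `𝒲^q`. -/
noncomputable def WeylAlgebra.V (q : ℂ) : WeylAlgebra q :=
  RingQuot.mkAlgHom ℂ (WRel q) (FreeAlgebra.ι ℂ 2)
/-- The diagonal matrix `u · diag(1, q², q⁴, …, q^(2N-2))`. -/
noncomputable def stdDiag (N : ℕ) (q u : ℂ) : Matrix (Fin N) (Fin N) ℂ :=
  Matrix.diagonal fun i => u * q ^ (2 * i.val)

/-- `v` times the cyclic permutation matrix sending the basis vector `e_i` to `e_{i+1 mod N}`. -/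
def stdCycle (N : ℕ) [NeZero N] (v : ℂ) : Matrix (Fin N) (Fin N) ℂ :=
  Matrix.of fun i j => if i = j + 1 then v else 0

/-- A matrix representation `ρ : A → End(ℂ^N)` is irreducible if `N ≠ 0` and the only
subspaces of `ℂ^N` invariant under all `ρ(a)` are `0` and everything. -/
def MatIsIrreducibleRep {A : Type*} [Ring A] [Algebra ℂ A] {N : ℕ}
    (ρ : A →ₐ[ℂ] Matrix (Fin N) (Fin N) ℂ) : Prop :=
  (∃ w : Fin N → ℂ, w ≠ 0) ∧
    ∀ W : Submodule ℂ (Fin N → ℂ),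
      (∀ (a : A), ∀ w ∈ W, (ρ a).mulVec w ∈ W) → W = ⊥ ∨ W = ⊤


/-- A representation `ρ : A → End(V)` is irreducible if `V ≠ 0` and the only invariant
subspaces are `0` and `V`. -/
def EndIsIrreducibleRep {A V : Type*} [Ring A] [Algebra ℂ A] [AddCommGroup V] [Module ℂ V]
    (ρ : A →ₐ[ℂ] Module.End ℂ V) : Prop :=
  (∃ v : V, v ≠ 0) ∧
    ∀ W : Submodule ℂ V, (∀ (a : A), ∀ w ∈ W, ρ a w ∈ W) → W = ⊥ ∨ W = ⊤

open Matrix Fin.NatCast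

theorem mul_pow_eq_smul_pow_mul {R A : Type*} [CommSemiring R] [Semiring A] [Algebra R A]
    {a b : A} {r : R} (h : a * b = r • (b * a)) (n : ℕ) : a * b ^ n = r ^ n • (b ^ n * a) := by
  induction n with
  | zero => simp
  | succ n ih =>
    rw [pow_succ, ← mul_assoc, ih, smul_mul_assoc, mul_assoc, h, mul_smul_comm, smul_smul,
      ← pow_succ, ← mul_assoc]

theorem LinearMap.comp_eq_comp_of_inverses {R M₁ M₂ : Type*} [Semiring R] [AddCommMonoid M₁]
    [Module R M₁] [AddCommMonoid M₂] [Module R M₂] {L : M₁ →ₗ[R] M₂} {f₁ g₁ : Module.End R M₁}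
    {f₂ g₂ : Module.End R M₂} (h : L ∘ₗ f₁ = f₂ ∘ₗ L) (h₁ : f₁ * g₁ = 1) (h₂ : g₂ * f₂ = 1) :
    L ∘ₗ g₁ = g₂ ∘ₗ L :=
  calc L ∘ₗ g₁ = (g₂ * f₂) ∘ₗ L ∘ₗ g₁ := by rw [h₂]; rfl
    _ = g₂ ∘ₗ (L ∘ₗ f₁) ∘ₗ g₁ := by rw [h]; rfl
    _ = g₂ ∘ₗ L := by rw [LinearMap.comp_assoc, ← Module.End.mul_eq_comp f₁, h₁]; rfl

theorem LinearEquiv.eq_comp_comp_symm_of_comp_eq {R M₁ M₂ : Type*} [Semiring R]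
    [AddCommMonoid M₁] [Module R M₁] [AddCommMonoid M₂] [Module R M₂] (e : M₁ ≃ₗ[R] M₂)
    {f : Module.End R M₁} {g : Module.End R M₂} (h : (e : M₁ →ₗ[R] M₂) ∘ₗ f = g ∘ₗ e) :
    g = (e : M₁ →ₗ[R] M₂) ∘ₗ f ∘ₗ (e.symm : M₂ →ₗ[R] M₁) := by
  rw [← LinearMap.comp_assoc, e.eq_comp_toLinearMap_symm, h]

theorem EndIsIrreducibleRep.surjective_of_comp_eq {A M₁ M : Type*} [Ring A] [Algebra ℂ A]
    [AddCommGroup M₁] [Module ℂ M₁] [AddCommGroup M] [Module ℂ M]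
    {ρ : A →ₐ[ℂ] Module.End ℂ M} (hρ : EndIsIrreducibleRep ρ) {f : A → Module.End ℂ M₁}
    {L : M₁ →ₗ[ℂ] M} (hL : ∀ a, L ∘ₗ f a = ρ a ∘ₗ L) (hL0 : L ≠ 0) : Function.Surjective L := by
  refine LinearMap.range_eq_top.mp <| (hρ.2 _ fun a y hy => ?_).resolve_left
    (LinearMap.range_eq_bot.not.mpr hL0)
  obtain ⟨x, rfl⟩ := LinearMap.mem_range.mp hy
  exact ⟨f a x, by rw [← LinearMap.comp_apply, hL, LinearMap.comp_apply]⟩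

theorem EndIsIrreducibleRep.exists_eq_smul_one {A M : Type*} [Ring A] [Algebra ℂ A]
    [AddCommGroup M] [Module ℂ M] [FiniteDimensional ℂ M] {ρ : A →ₐ[ℂ] Module.End ℂ M}
    (hρ : EndIsIrreducibleRep ρ) {T : Module.End ℂ M} (hT : ∀ a, T ∘ₗ ρ a = ρ a ∘ₗ T) :
    ∃ c : ℂ, T = c • 1 := by
  obtain ⟨⟨m, hm⟩, hirr⟩ := hρ
  have : Nontrivial M := ⟨m, 0, hm⟩
  obtain ⟨c, hc⟩ := T.exists_eigenvalue
  have hinv : ∀ a, ∀ x ∈ T.eigenspace c, ρ a x ∈ T.eigenspace c := fun a x hx => by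
    rw [Module.End.mem_eigenspace_iff] at hx ⊢
    rw [← LinearMap.comp_apply, hT, LinearMap.comp_apply, hx, map_smul]
  have htop := (hirr _ hinv).resolve_left (Module.End.hasEigenvalue_iff.mp hc)
  exact ⟨c, LinearMap.ext fun x => Module.End.mem_eigenspace_iff.mp (htop ▸ Submodule.mem_top)⟩

namespace WeylAlgebra

variable (q : ℂ)

noncomputable def Uinv : WeylAlgebra q := RingQuot.mkAlgHom ℂ (WRel q) (FreeAlgebra.ι ℂ 1)

noncomputable def Vinv : WeylAlgebra q := RingQuot.mkAlgHom ℂ (WRel q) (FreeAlgebra.ι ℂ 3)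

theorem U_mul_V : U q * V q = q ^ 2 • (V q * U q) := by
  simpa [U, V] using RingQuot.mkAlgHom_rel ℂ (WRel.comm (q := q))

theorem U_mul_Uinv : U q * Uinv q = 1 := by
  simpa [U, Uinv] using RingQuot.mkAlgHom_rel ℂ (WRel.U_Uinv (q := q))

theorem Uinv_mul_U : Uinv q * U q = 1 := by
  simpa [U, Uinv] using RingQuot.mkAlgHom_rel ℂ (WRel.Uinv_U (q := q))

theorem V_mul_Vinv : V q * Vinv q = 1 := by
  simpa [V, Vinv] using RingQuot.mkAlgHom_rel ℂ (WRel.V_Vinv (q := q))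

theorem Vinv_mul_V : Vinv q * V q = 1 := by
  simpa [V, Vinv] using RingQuot.mkAlgHom_rel ℂ (WRel.Vinv_V (q := q))

theorem isUnit_U : IsUnit (U q) := ⟨⟨U q, Uinv q, U_mul_Uinv q, Uinv_mul_U q⟩, rfl⟩

theorem isUnit_V : IsUnit (V q) := ⟨⟨V q, Vinv q, V_mul_Vinv q, Vinv_mul_V q⟩, rfl⟩

@[elab_as_elim]
theorem induction_on {P : WeylAlgebra q → Prop} (a : WeylAlgebra q)
    (algebraMap : ∀ r : ℂ, P (algebraMap ℂ (WeylAlgebra q) r))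
    (U : P (U q)) (Uinv : P (Uinv q)) (V : P (V q)) (Vinv : P (Vinv q))
    (add : ∀ x y, P x → P y → P (x + y)) (mul : ∀ x y, P x → P y → P (x * y)) : P a := by
  obtain ⟨a, rfl⟩ := RingQuot.mkAlgHom_surjective ℂ (WRel q) a
  induction a using FreeAlgebra.induction with
  | grade0 r => simpa only [AlgHom.commutes] using algebraMap r
  | grade1 i => fin_cases i <;> assumption
  | mul a b ha hb => simpa only [map_mul] using mul _ _ ha hb
  | add a b ha hb => simpa only [map_add] using add _ _ ha hb

variable {q}

noncomputable def lift {B : Type*} [Semiring B] [Algebra ℂ B] {x y : B} (hx : IsUnit x)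
    (hy : IsUnit y) (hxy : x * y = q ^ 2 • (y * x)) : WeylAlgebra q →ₐ[ℂ] B :=
  RingQuot.liftAlgHom ℂ ⟨FreeAlgebra.lift ℂ ![x, ↑hx.unit⁻¹, y, ↑hy.unit⁻¹], fun _ _ r => by
    cases r <;> simp [hxy]⟩

theorem lift_U {B : Type*} [Semiring B] [Algebra ℂ B] {x y : B} (hx : IsUnit x)
    (hy : IsUnit y) (hxy : x * y = q ^ 2 • (y * x)) : lift hx hy hxy (U q) = x := by
  simp [lift, U]

theorem lift_V {B : Type*} [Semiring B] [Algebra ℂ B] {x y : B} (hx : IsUnit x)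
    (hy : IsUnit y) (hxy : x * y = q ^ 2 • (y * x)) : lift hx hy hxy (V q) = y := by
  simp [lift, V]

theorem comp_map_eq_map_comp {M₁ M₂ : Type*} [AddCommGroup M₁] [Module ℂ M₁] [AddCommGroup M₂]
    [Module ℂ M₂] (σ : WeylAlgebra q →ₐ[ℂ] Module.End ℂ M₁)
    (ρ : WeylAlgebra q →ₐ[ℂ] Module.End ℂ M₂) (L : M₁ →ₗ[ℂ] M₂)
    (hU : L ∘ₗ σ (U q) = ρ (U q) ∘ₗ L) (hV : L ∘ₗ σ (V q) = ρ (V q) ∘ₗ L) (a : WeylAlgebra q) :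
    L ∘ₗ σ a = ρ a ∘ₗ L := by
  induction a using induction_on with
  | algebraMap r => ext; simp
  | U => exact hU
  | V => exact hV
  | Uinv =>
    exact LinearMap.comp_eq_comp_of_inverses hU
      (by rw [← map_mul, U_mul_Uinv, map_one]) (by rw [← map_mul, Uinv_mul_U, map_one])
  | Vinv =>
    exact LinearMap.comp_eq_comp_of_inverses hV
      (by rw [← map_mul, V_mul_Vinv, map_one]) (by rw [← map_mul, Vinv_mul_V, map_one])
  | add x y hx hy => rw [map_add, map_add, LinearMap.comp_add, LinearMap.add_comp, hx, hy]
  | mul x y hx hy =>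
    simp only [map_mul, Module.End.mul_eq_comp, ← LinearMap.comp_assoc, hx]
    rw [LinearMap.comp_assoc, hy, LinearMap.comp_assoc]

theorem U_mul_V_pow_eq {N : ℕ} (hq : (q ^ 2) ^ N = 1) :
    U q * V q ^ N = V q ^ N * U q := by
  rw [mul_pow_eq_smul_pow_mul (U_mul_V q), hq, one_smul]

end WeylAlgebra

section StandardRepresentation

variable {N : ℕ}

theorem stdDiag_mulVec_single (q u : ℂ) (j : Fin N) (c : ℂ) :
    stdDiag N q u *ᵥ Pi.single j c = Pi.single j (u * q ^ (2 * j.val) * c) := by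
  ext i
  rcases eq_or_ne i j with rfl | h <;> simp [stdDiag, mulVec_diagonal, *]

theorem stdDiag_pow (q u : ℂ) (hq : (q ^ 2) ^ N = 1) : stdDiag N q u ^ N = u ^ N • 1 := by
  have hq' (k : ℕ) : (q ^ (2 * k)) ^ N = 1 := by
    rw [pow_mul, ← pow_mul, mul_comm, pow_mul, hq, one_pow]
  ext i j
  rcases eq_or_ne i j with rfl | h
  · simp [stdDiag, diagonal_pow, mul_pow, hq']
  · simp [stdDiag, diagonal_pow, h]

theorem isUnit_stdDiag {q u : ℂ} (hq : q ≠ 0) (hu : u ≠ 0) : IsUnit (stdDiag N q u) :=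
  isUnit_diagonal.mpr (Pi.isUnit_iff.mpr fun _ => (mul_ne_zero hu (pow_ne_zero _ hq)).isUnit)

variable [NeZero N]

theorem stdCycle_mulVec_single (v : ℂ) (j : Fin N) (c : ℂ) :
    stdCycle N v *ᵥ Pi.single j c = Pi.single (j + 1) (v * c) := by
  ext i
  simp [stdCycle, mulVec, dotProduct, Pi.single_apply]

theorem stdCycle_pow_mulVec_single (v : ℂ) (n : ℕ) (j : Fin N) (c : ℂ) :
    stdCycle N v ^ n *ᵥ Pi.single j c = Pi.single (j + n) (v ^ n * c) := by
  induction n with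
  | zero => rw [pow_zero, one_mulVec, Nat.cast_zero, add_zero, pow_zero, one_mul]
  | succ n ih =>
    rw [pow_succ', ← mulVec_mulVec, ih, stdCycle_mulVec_single, Nat.cast_succ, add_assoc,
      pow_succ', mul_assoc]

theorem stdCycle_pow (v : ℂ) : stdCycle N v ^ N = v ^ N • 1 :=
  ext_of_mulVec_single fun j => by
    rw [stdCycle_pow_mulVec_single, Fin.natCast_self, add_zero, smul_mulVec, one_mulVec,
      ← Pi.single_smul, smul_eq_mul]

theorem stdDiag_mul_stdCycle {q : ℂ} (hq : (q ^ 2) ^ N = 1) (u v : ℂ) :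
    stdDiag N q u * stdCycle N v = q ^ 2 • (stdCycle N v * stdDiag N q u) := by
  refine ext_of_mulVec_single fun j => ?_
  have hpow : q ^ (2 * (j + 1 : Fin N).val) = q ^ 2 * q ^ (2 * j.val) := by
    rw [pow_mul, pow_mul, Fin.val_add, Fin.val_one', Nat.add_mod_mod, ← pow_eq_pow_mod _ hq,
      pow_succ']
  simp only [← mulVec_mulVec, smul_mulVec, stdCycle_mulVec_single, stdDiag_mulVec_single, hpow,
    ← Pi.single_smul, smul_eq_mul]
  ring_nf

theorem isUnit_stdCycle {v : ℂ} (hv : v ≠ 0) : IsUnit (stdCycle N v) := by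
  rw [← isUnit_pow_iff (NeZero.ne N), stdCycle_pow, ← Algebra.algebraMap_eq_smul_one]
  exact (pow_ne_zero N hv).isUnit.map _

/-- The representation `ρ_{uv}` on `ℂ^N`. -/
noncomputable def stdRep {q : ℂ} (hq : (q ^ 2) ^ N = 1) {u v : ℂ} (hu : u ≠ 0) (hv : v ≠ 0) :
    WeylAlgebra q →ₐ[ℂ] Matrix (Fin N) (Fin N) ℂ :=
  have hq0 : q ≠ 0 := by rintro rfl; simp [NeZero.ne N] at hq
  WeylAlgebra.lift (isUnit_stdDiag hq0 hu) (isUnit_stdCycle hv) (stdDiag_mul_stdCycle hq u v)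

theorem stdRep_U {q : ℂ} (hq : (q ^ 2) ^ N = 1) {u v : ℂ} (hu : u ≠ 0) (hv : v ≠ 0) :
    stdRep hq hu hv (WeylAlgebra.U q) = stdDiag N q u :=
  WeylAlgebra.lift_U _ _ (stdDiag_mul_stdCycle hq u v)

theorem stdRep_V {q : ℂ} (hq : (q ^ 2) ^ N = 1) {u v : ℂ} (hu : u ≠ 0) (hv : v ≠ 0) :
    stdRep hq hu hv (WeylAlgebra.V q) = stdCycle N v :=
  WeylAlgebra.lift_V _ _ (stdDiag_mul_stdCycle hq u v)

end StandardRepresentation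

section CyclicVectors

open WeylAlgebra

variable {q : ℂ} {M : Type*} [AddCommGroup M] [Module ℂ M]
  (ρ : WeylAlgebra q →ₐ[ℂ] Module.End ℂ M) {u v : ℂ} (w : M)

/-- On `ℂ^N` with `ρ = ρ_{uv}` and `w = e₀`, these are the standard basis vectors. -/
noncomputable def cyclicVec (v : ℂ) (n : ℕ) : M := ((v⁻¹ • ρ (V q)) ^ n) w

theorem map_V_cyclicVec (hv : v ≠ 0) (n : ℕ) :
    ρ (V q) (cyclicVec ρ w v n) = v • cyclicVec ρ w v (n + 1) := by
  rw [cyclicVec, cyclicVec, pow_succ', Module.End.mul_apply, LinearMap.smul_apply, smul_smul,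
    mul_inv_cancel₀ hv, one_smul]

theorem map_U_cyclicVec (hUw : ρ (U q) w = u • w) (n : ℕ) :
    ρ (U q) (cyclicVec ρ w v n) = (u * (q ^ 2) ^ n) • cyclicVec ρ w v n := by
  have hcomm : ρ (U q) * (v⁻¹ • ρ (V q)) = q ^ 2 • ((v⁻¹ • ρ (V q)) * ρ (U q)) := by
    rw [mul_smul_comm, smul_mul_assoc, ← map_mul, ← map_mul, U_mul_V, map_smul, smul_comm]
  rw [cyclicVec, ← Module.End.mul_apply, mul_pow_eq_smul_pow_mul hcomm, LinearMap.smul_apply,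
    Module.End.mul_apply, hUw, map_smul, smul_smul, mul_comm]

variable {N : ℕ}

theorem cyclicVec_N (hv : v ≠ 0) (hVw : (ρ (V q) ^ N) w = v ^ N • w) :
    cyclicVec ρ w v N = w := by
  rw [cyclicVec, smul_pow, LinearMap.smul_apply, hVw, smul_smul, inv_pow,
    inv_mul_cancel₀ (pow_ne_zero N hv), one_smul]

theorem cyclicVec_Nic (hv : v ≠ 0) (hVw : (ρ (V q) ^ N) w = v ^ N • w) :
    Function.Periodic (cyclicVec ρ w v) N := fun n => by
  conv_rhs => rw [← cyclicVec_N ρ w hv hVw]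
  rw [cyclicVec, cyclicVec, cyclicVec, pow_add, Module.End.mul_apply]

theorem cyclicVec_ne_zero (hv : v ≠ 0) (hVw : (ρ (V q) ^ N) w = v ^ N • w) (hw : w ≠ 0)
    {n : ℕ} (hn : n ≤ N) : cyclicVec ρ w v n ≠ 0 := fun h => hw <| by
  rw [cyclicVec] at h
  rw [← cyclicVec_N ρ w hv hVw, cyclicVec, ← Nat.sub_add_cancel hn, pow_add,
    Module.End.mul_apply, h, map_zero]

noncomputable def cyclicMap (N : ℕ) (v : ℂ) : (Fin N → ℂ) →ₗ[ℂ] M :=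
  Fintype.linearCombination ℂ fun k : Fin N => cyclicVec ρ w v k

theorem cyclicMap_single (k : Fin N) (c : ℂ) :
    cyclicMap ρ w N v (Pi.single k c) = c • cyclicVec ρ w v k :=
  Fintype.linearCombination_apply_single ℂ _ k c

theorem cyclicMap_comp_stdDiag (hUw : ρ (U q) w = u • w) :
    cyclicMap ρ w N v ∘ₗ (stdDiag N q u).mulVecLin = ρ (U q) ∘ₗ cyclicMap ρ w N v := by
  refine LinearMap.pi_ext fun k c => ?_
  simp only [LinearMap.comp_apply, Matrix.mulVecLin_apply, stdDiag_mulVec_single,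
    cyclicMap_single, map_smul, map_U_cyclicVec ρ w hUw, smul_smul, pow_mul]
  ring_nf

theorem cyclicMap_comp_stdCycle [NeZero N] (hv : v ≠ 0) (hVw : (ρ (V q) ^ N) w = v ^ N • w) :
    cyclicMap ρ w N v ∘ₗ (stdCycle N v).mulVecLin = ρ (V q) ∘ₗ cyclicMap ρ w N v := by
  refine LinearMap.pi_ext fun k c => ?_
  simp only [LinearMap.comp_apply, Matrix.mulVecLin_apply, stdCycle_mulVec_single,
    cyclicMap_single, map_smul, map_V_cyclicVec ρ w hv, smul_smul, Fin.val_add, Fin.val_one',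
    Nat.add_mod_mod, (cyclicVec_Nic ρ w hv hVw).map_mod_nat, mul_comm]

theorem cyclicMap_comp [NeZero N] (σ : WeylAlgebra q →ₐ[ℂ] Matrix (Fin N) (Fin N) ℂ)
    (hσU : σ (U q) = stdDiag N q u) (hσV : σ (V q) = stdCycle N v) (hv : v ≠ 0)
    (hUw : ρ (U q) w = u • w) (hVw : (ρ (V q) ^ N) w = v ^ N • w) (a : WeylAlgebra q) :
    cyclicMap ρ w N v ∘ₗ (σ a).mulVecLin = ρ a ∘ₗ cyclicMap ρ w N v :=
  comp_map_eq_map_comp (Matrix.toLinAlgEquiv'.toAlgHom.comp σ) ρ _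
    (by rw [AlgHom.comp_apply, hσU]; exact cyclicMap_comp_stdDiag ρ w hUw)
    (by rw [AlgHom.comp_apply, hσV]; exact cyclicMap_comp_stdCycle ρ w hv hVw) a

theorem cyclicMap_injective (hq : IsPrimitiveRoot (q ^ 2) N) (hu : u ≠ 0) (hv : v ≠ 0)
    (hUw : ρ (U q) w = u • w) (hVw : (ρ (V q) ^ N) w = v ^ N • w) (hw : w ≠ 0) :
    Function.Injective (cyclicMap ρ w N v) := by
  have hμ : Function.Injective fun k : Fin N => u * (q ^ 2) ^ k.val := fun i j hij =>
    Fin.ext (hq.pow_inj i.isLt j.isLt (mul_left_cancel₀ hu hij))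
  refine linearIndependent_iff_injective_fintypeLinearCombination.mp <|
    (ρ (U q)).eigenvectors_linearIndependent' _ hμ _ fun k => ⟨?_, ?_⟩
  · exact Module.End.mem_eigenspace_iff.mpr (map_U_cyclicVec ρ w hUw k)
  · exact cyclicVec_ne_zero ρ w hv hVw hw k.isLt.le

end CyclicVectors

section IrreducibleRepresentations

open WeylAlgebra

variable {q : ℂ} {N : ℕ} [NeZero N] {M : Type*} [AddCommGroup M] [Module ℂ M]
  [FiniteDimensional ℂ M] {ρ : WeylAlgebra q →ₐ[ℂ] Module.End ℂ M}

theorem EndIsIrreducibleRep.exists_map_V_pow_eq_smul_one (hq : (q ^ 2) ^ N = 1)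
    (hρ : EndIsIrreducibleRep ρ) : ∃ v : ℂ, v ≠ 0 ∧ ρ (V q) ^ N = v ^ N • 1 := by
  have : Nontrivial M := let ⟨m, hm⟩ := hρ.1; ⟨m, 0, hm⟩
  obtain ⟨c, hc⟩ := hρ.exists_eq_smul_one (T := ρ (V q) ^ N) <| comp_map_eq_map_comp ρ ρ _
    (by simp only [← Module.End.mul_eq_comp, ← map_pow, ← map_mul, U_mul_V_pow_eq hq])
    (pow_mul_comm' _ _)
  have hc0 : c ≠ 0 := fun hc0 => by
    have := ((isUnit_V q).map ρ).pow N
    rw [hc, hc0, zero_smul] at this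
    exact not_isUnit_zero this
  obtain ⟨v, rfl⟩ := IsAlgClosed.exists_pow_nat_eq c (NeZero.pos N)
  exact ⟨v, by rintro rfl; exact hc0 (zero_pow (NeZero.ne N)), hc⟩

theorem EndIsIrreducibleRep.exists_linearEquiv_stdRep (hq : IsPrimitiveRoot (q ^ 2) N)
    (hρ : EndIsIrreducibleRep ρ) :
    ∃ (u v : ℂ) (hu : u ≠ 0) (hv : v ≠ 0) (L : (Fin N → ℂ) ≃ₗ[ℂ] M), ∀ a : WeylAlgebra q,
      ρ a = (L : (Fin N → ℂ) →ₗ[ℂ] M) ∘ₗ (stdRep hq.pow_eq_one hu hv a).mulVecLin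
        ∘ₗ (L.symm : M →ₗ[ℂ] (Fin N → ℂ)) := by
  have : Nontrivial M := let ⟨m, hm⟩ := hρ.1; ⟨m, 0, hm⟩
  obtain ⟨v, hv, hVN⟩ := hρ.exists_map_V_pow_eq_smul_one hq.pow_eq_one
  obtain ⟨u, hu⟩ := (ρ (U q)).exists_eigenvalue
  obtain ⟨w, hw⟩ := hu.exists_hasEigenvector
  have hUw := hw.apply_eq_smul
  have hVw : (ρ (V q) ^ N) w = v ^ N • w := by rw [hVN]; rfl
  have hu0 : u ≠ 0 := by
    rintro rfl
    refine hw.2 (((Module.End.isUnit_iff _).mp ((isUnit_U q).map ρ)).injective ?_)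
    rw [hUw, zero_smul, map_zero]
  have hinj := cyclicMap_injective ρ w hq hu0 hv hUw hVw hw.2
  have hL := cyclicMap_comp ρ w _ (stdRep_U hq.pow_eq_one hu0 hv) (stdRep_V hq.pow_eq_one hu0 hv)
    hv hUw hVw
  have hsurj := hρ.surjective_of_comp_eq hL (LinearMap.ne_zero_of_injective hinj)
  exact ⟨u, v, hu0, hv, .ofBijective _ ⟨hinj, hsurj⟩, fun a =>
    LinearEquiv.eq_comp_comp_symm_of_comp_eq _ (hL a)⟩

end IrreducibleRepresentations

theorem eq_of_smul_one_eq_conj {N : ℕ} [NeZero N] {c d : ℂ}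
    (L : (Fin N → ℂ) ≃ₗ[ℂ] (Fin N → ℂ))
    (h : (d • 1 : Matrix (Fin N) (Fin N) ℂ).mulVecLin = (L : (Fin N → ℂ) →ₗ[ℂ] (Fin N → ℂ))
      ∘ₗ (c • 1 : Matrix (Fin N) (Fin N) ℂ).mulVecLin ∘ₗ (L.symm : (Fin N → ℂ) →ₗ[ℂ] (Fin N → ℂ))) :
    d = c := by
  simpa using LinearMap.congr_fun h (Pi.single 0 1)

open WeylAlgebra in
theorem exists_conj_iff_pow_eq_pow {q : ℂ} {N : ℕ} [NeZero N] (hq : IsPrimitiveRoot (q ^ 2) N)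
    {u v u' v' : ℂ} (hu : u ≠ 0) (hv : v ≠ 0) (hu' : u' ≠ 0)
    {ρ₁ ρ₂ : WeylAlgebra q →ₐ[ℂ] Matrix (Fin N) (Fin N) ℂ}
    (h1U : ρ₁ (U q) = stdDiag N q u) (h1V : ρ₁ (V q) = stdCycle N v)
    (h2U : ρ₂ (U q) = stdDiag N q u') (h2V : ρ₂ (V q) = stdCycle N v') :
    (∃ L : (Fin N → ℂ) ≃ₗ[ℂ] (Fin N → ℂ), ∀ a : WeylAlgebra q,
      (ρ₂ a).mulVecLin = (L : (Fin N → ℂ) →ₗ[ℂ] (Fin N → ℂ)) ∘ₗ (ρ₁ a).mulVecLin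
        ∘ₗ (L.symm : (Fin N → ℂ) →ₗ[ℂ] (Fin N → ℂ))) ↔ u ^ N = u' ^ N ∧ v ^ N = v' ^ N := by
  constructor
  · rintro ⟨L, hL⟩
    have hUN := hL (U q ^ N)
    have hVN := hL (V q ^ N)
    rw [map_pow, map_pow, h1U, h2U, stdDiag_pow _ _ hq.pow_eq_one,
      stdDiag_pow _ _ hq.pow_eq_one] at hUN
    rw [map_pow, map_pow, h1V, h2V, stdCycle_pow, stdCycle_pow] at hVN
    exact ⟨(eq_of_smul_one_eq_conj L hUN).symm, (eq_of_smul_one_eq_conj L hVN).symm⟩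
  · rintro ⟨hU, hV⟩
    obtain ⟨s, hs, hsu⟩ := hq.eq_pow_of_pow_eq_one (ξ := u / u')
      (by rw [div_pow, hU, div_self (pow_ne_zero _ hu')])
    let ρ := Matrix.toLinAlgEquiv'.toAlgHom.comp ρ₂
    let w : Fin N → ℂ := Pi.single ⟨s, hs⟩ 1
    have hUw : ρ (U q) w = u • w := by
      change ρ₂ (U q) *ᵥ w = u • w
      rw [h2U, stdDiag_mulVec_single, ← Pi.single_smul, smul_eq_mul, pow_mul, hsu,
        mul_div_cancel₀ _ hu']
    have hVw : (ρ (V q) ^ N) w = v ^ N • w := by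
      rw [← map_pow]
      change ρ₂ (V q ^ N) *ᵥ w = v ^ N • w
      rw [map_pow, h2V, stdCycle_pow, smul_mulVec, one_mulVec, hV]
    have hinj := cyclicMap_injective ρ w hq hu hv hUw hVw (by simp [w])
    have hL := cyclicMap_comp ρ w ρ₁ h1U h1V hv hUw hVw
    exact ⟨.ofBijective _ ⟨hinj, LinearMap.injective_iff_surjective.mp hinj⟩, fun a =>
      LinearEquiv.eq_comp_comp_symm_of_comp_eq _ (hL a)⟩

/-- Let `q²` be a primitive `N`-th root of unity.  Every finite-dimensional
irreducible representation of `𝒲^q` has dimension `N` and is isomorphic to the standard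
representation `ρ_{uv}` (`U ↦ u·diag(1, q², …, q^(2N-2))`, `V ↦ v·(cyclic shift)`) for some
`u, v ∈ ℂ*`; moreover `ρ_{uv} ≅ ρ_{u'v'}` if and only if `u^N = u'^N` and `v^N = v'^N`. -/
theorem weylAlgebra_rep_classification (q : ℂ) (N : ℕ) [NeZero N]
    (hq : IsPrimitiveRoot (q ^ 2) N) :
    (∀ (V : Type*) [AddCommGroup V] [Module ℂ V] [FiniteDimensional ℂ V]
        (ρ : WeylAlgebra q →ₐ[ℂ] Module.End ℂ V), EndIsIrreducibleRep ρ →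
      Module.finrank ℂ V = N ∧
        ∃ (u v : ℂ), u ≠ 0 ∧ v ≠ 0 ∧
          ∃ ρuv : WeylAlgebra q →ₐ[ℂ] Matrix (Fin N) (Fin N) ℂ,
            ρuv (WeylAlgebra.U q) = stdDiag N q u ∧ ρuv (WeylAlgebra.V q) = stdCycle N v ∧
              ∃ L : (Fin N → ℂ) ≃ₗ[ℂ] V,
                ∀ a : WeylAlgebra q,
                  ρ a = (L : (Fin N → ℂ) →ₗ[ℂ] V) ∘ₗ (ρuv a).mulVecLin
                    ∘ₗ (L.symm : V →ₗ[ℂ] (Fin N → ℂ))) ∧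
    (∀ (u v u' v' : ℂ), u ≠ 0 → v ≠ 0 → u' ≠ 0 → v' ≠ 0 →
      ∀ (ρ₁ ρ₂ : WeylAlgebra q →ₐ[ℂ] Matrix (Fin N) (Fin N) ℂ),
        ρ₁ (WeylAlgebra.U q) = stdDiag N q u → ρ₁ (WeylAlgebra.V q) = stdCycle N v →
        ρ₂ (WeylAlgebra.U q) = stdDiag N q u' → ρ₂ (WeylAlgebra.V q) = stdCycle N v' →
        ((∃ L : (Fin N → ℂ) ≃ₗ[ℂ] (Fin N → ℂ),
            ∀ a : WeylAlgebra q,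
              (ρ₂ a).mulVecLin = (L : (Fin N → ℂ) →ₗ[ℂ] (Fin N → ℂ)) ∘ₗ (ρ₁ a).mulVecLin
                ∘ₗ (L.symm : (Fin N → ℂ) →ₗ[ℂ] (Fin N → ℂ)))
          ↔ (u ^ N = u' ^ N ∧ v ^ N = v' ^ N))) := by
  refine ⟨fun V _ _ _ ρ hρ => ?_, fun u v u' v' hu hv hu' _ ρ₁ ρ₂ h1U h1V h2U h2V =>
    exists_conj_iff_pow_eq_pow hq hu hv hu' h1U h1V h2U h2V⟩
  obtain ⟨u, v, hu, hv, L, hL⟩ := hρ.exists_linearEquiv_stdRep hq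
  exact ⟨by rw [← L.finrank_eq, Module.finrank_fin_fun], u, v, hu, hv, _,
    stdRep_U hq.pow_eq_one hu hv, stdRep_V hq.pow_eq_one hu hv, L, hL⟩
end

section
/- Let N be even, q ∈ ℂ* with q² a primitive N-th root of unity and q^N = -1, and let X, X_j be invertible elements of a ℂ-algebra with X_j X = q⁴ X X_j. Set U = (1 + q³X)X_j. Then ((1+qX)(1+q³X)X_j)^{N/2} = (1 + (-1)^{(N-2)/2} q^{N/2} X^{N/2})(1 + (-1)^{N/2} q^{N/2} X^{N/2}) X_j^{N/2}, and consequently ((1+qX)(1+q³X)X_j)^N = (1 + X^N)² X_j^N. -/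
/-!
If `y * x = ζ • (x * y)`, then `(x + y) ^ n` expands with the Gaussian binomial coefficients
`[n, k]_ζ`. When `ζ` is a primitive `M`-th root of unity, the relation
`(1 - ζ ^ (k + 1)) [M, k + 1]_ζ = (1 - ζ ^ (M - k)) [M, k]_ζ` kills every coefficient with
`0 < k < M`, so `(x + y) ^ M = x ^ M + y ^ M`. Since `(1 + c x) y = c x y + y`, this computes
`((1 + c x) y) ^ M`. With `M = N / 2` and `ζ = q⁴`, apply it first to `U = (1 + q³X) X_j` and
then to `(1 + qX) U`; this works because `U X = q⁴ X U` as well. The two resulting coefficients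
are `±(-1) ^ (M - 1) q ^ M`, whose square is `q ^ N = -1`, so the linear factors multiply to
`1 + X ^ N`. Squaring then gives the second identity, since `X_j ^ M` commutes with `X ^ N`.
-/

open Finset

section qBinomial

variable {R : Type*} [CommRing R]

def qBinomial (ζ : R) : ℕ → ℕ → R
  | _, 0 => 1
  | 0, _ + 1 => 0
  | n + 1, k + 1 => qBinomial ζ n k + ζ ^ (k + 1) * qBinomial ζ n (k + 1)

variable (ζ : R)

@[simp]
theorem qBinomial_zero_right (n : ℕ) : qBinomial ζ n 0 = 1 := by
  cases n <;> rfl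

theorem qBinomial_succ_succ (n k : ℕ) :
    qBinomial ζ (n + 1) (k + 1) = qBinomial ζ n k + ζ ^ (k + 1) * qBinomial ζ n (k + 1) :=
  rfl

theorem qBinomial_eq_zero_of_lt : ∀ {n k : ℕ}, n < k → qBinomial ζ n k = 0
  | 0, _ + 1, _ => rfl
  | n + 1, k + 1, h => by
    rw [qBinomial_succ_succ, qBinomial_eq_zero_of_lt (by omega),
      qBinomial_eq_zero_of_lt (k := k + 1) (by omega), mul_zero, add_zero]

@[simp]
theorem qBinomial_self : ∀ n : ℕ, qBinomial ζ n n = 1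
  | 0 => rfl
  | n + 1 => by
    rw [qBinomial_succ_succ, qBinomial_self n, qBinomial_eq_zero_of_lt ζ n.lt_succ_self,
      mul_zero, add_zero]

theorem one_sub_pow_mul_qBinomial_succ : ∀ n k : ℕ,
    (1 - ζ ^ (k + 1)) * qBinomial ζ n (k + 1) = (1 - ζ ^ (n - k)) * qBinomial ζ n k
  | 0, k => by simp [qBinomial_eq_zero_of_lt ζ k.succ_pos]
  | n + 1, 0 => by
    have ih := one_sub_pow_mul_qBinomial_succ n 0
    simp only [qBinomial_succ_succ, qBinomial_zero_right, zero_add, pow_one, Nat.sub_zero,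
      mul_one] at ih ⊢
    linear_combination ζ * ih
  | n + 1, k + 1 => by
    rcases lt_or_ge k n with hkn | hnk
    · have ih₁ := one_sub_pow_mul_qBinomial_succ n k
      have ih₂ := one_sub_pow_mul_qBinomial_succ n (k + 1)
      have hpow : ζ ^ (n - k) = ζ * ζ ^ (n - (k + 1)) := by
        rw [← pow_succ']; congr 1; omega
      rw [qBinomial_succ_succ, qBinomial_succ_succ, Nat.add_sub_add_right]
      linear_combination
        ih₁ + ζ ^ (k + 2) * ih₂ + (ζ ^ (k + 1) * qBinomial ζ n (k + 1)) * hpow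
    · rw [qBinomial_eq_zero_of_lt ζ (k := k + 1 + 1) (by omega),
        Nat.sub_eq_zero_of_le (by omega)]
      ring

end qBinomial

theorem IsPrimitiveRoot.qBinomial_eq_zero {R : Type*} [CommRing R] [IsDomain R] {ζ : R} {M : ℕ}
    (hζ : IsPrimitiveRoot ζ M) : ∀ {k : ℕ}, 0 < k → k < M → qBinomial ζ M k = 0
  | k + 1, _, hkM => by
    have hstep := one_sub_pow_mul_qBinomial_succ ζ M k
    have hrhs : (1 - ζ ^ (M - k)) * qBinomial ζ M k = 0 := by
      rcases k.eq_zero_or_pos with rfl | hk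
      · rw [Nat.sub_zero, hζ.pow_eq_one, sub_self, zero_mul]
      · rw [hζ.qBinomial_eq_zero hk (by omega), mul_zero]
    have hne : 1 - ζ ^ (k + 1) ≠ 0 :=
      sub_ne_zero.mpr (hζ.pow_ne_one_of_pos_of_lt k.succ_ne_zero hkM).symm
    exact (mul_eq_zero.mp (hstep.trans hrhs)).resolve_left hne

section QuantumPlane

variable {R A : Type*} [CommRing R] [Ring A] [Algebra R A] {ζ : R} {x y : A}

theorem mul_pow_eq_smul_pow_mul_s16 (h : y * x = ζ • (x * y)) :
    ∀ k : ℕ, y * x ^ k = ζ ^ k • (x ^ k * y)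
  | 0 => by simp
  | k + 1 => by
    rw [pow_succ, ← mul_assoc, mul_pow_eq_smul_pow_mul_s16 h k, smul_mul_assoc, mul_assoc, h,
      mul_smul_comm, smul_smul, ← pow_succ, ← mul_assoc, ← pow_succ]

theorem mul_pow_of_mul_eq_smul (h : y * x = ζ • (x * y)) :
    ∀ n : ℕ, (x * y) ^ n = ζ ^ n.choose 2 • (x ^ n * y ^ n)
  | 0 => by simp
  | n + 1 => by
    rw [pow_succ', mul_pow_of_mul_eq_smul h n, mul_smul_comm, mul_assoc, ← mul_assoc y,
      mul_pow_eq_smul_pow_mul_s16 h n, smul_mul_assoc, mul_smul_comm, smul_smul, ← pow_add,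
      ← mul_assoc, ← mul_assoc, ← pow_succ', mul_assoc, ← pow_succ', Nat.choose_succ_succ',
      Nat.choose_one_right, add_comm (n.choose 2)]

theorem commute_pow_of_pow_eq_one {n : ℕ} (h : y * x = ζ • (x * y)) (hn : ζ ^ n = 1) :
    Commute (x ^ n) y :=
  (by rw [mul_pow_eq_smul_pow_mul_s16 h, hn, one_smul] : y * x ^ n = x ^ n * y).symm

theorem add_pow_eq_sum_qBinomial (h : y * x = ζ • (x * y)) (n : ℕ) :
    (x + y) ^ n = ∑ k ∈ range (n + 1), qBinomial ζ n k • (x ^ k * y ^ (n - k)) := by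
  induction n with
  | zero => simp
  | succ n ih =>
    have hterm : ∀ k ∈ range (n + 1), (x + y) * (qBinomial ζ n k • (x ^ k * y ^ (n - k))) =
        qBinomial ζ n k • (x ^ (k + 1) * y ^ (n - k)) +
          (ζ ^ k * qBinomial ζ n k) • (x ^ k * y ^ (n + 1 - k)) := by
      intro k hk
      rw [Nat.sub_add_comm (Nat.lt_succ_iff.mp (mem_range.mp hk)), add_mul, mul_smul_comm,
        mul_smul_comm, ← mul_assoc, ← pow_succ', ← mul_assoc, mul_pow_eq_smul_pow_mul_s16 h,
        smul_mul_assoc, smul_smul, mul_assoc, ← pow_succ', mul_comm (qBinomial ζ n k)]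
    have hlow : ∑ k ∈ range (n + 1), (ζ ^ k * qBinomial ζ n k) • (x ^ k * y ^ (n + 1 - k)) =
        ∑ k ∈ range (n + 1), (ζ ^ (k + 1) * qBinomial ζ n (k + 1)) •
          (x ^ (k + 1) * y ^ (n - k)) + y ^ (n + 1) := by
      have htop : (ζ ^ (n + 1) * qBinomial ζ n (n + 1)) • (x ^ (n + 1) * y ^ (n + 1 - (n + 1)))
          = 0 := by
        rw [qBinomial_eq_zero_of_lt ζ n.lt_succ_self, mul_zero, zero_smul]
      rw [← add_zero (∑ k ∈ range (n + 1), _), ← htop, ← sum_range_succ, sum_range_succ']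
      simp
    rw [pow_succ', ih, mul_sum, sum_congr rfl hterm, sum_add_distrib, hlow,
      sum_range_succ' _ (n + 1), ← add_assoc, ← sum_add_distrib]
    simp only [qBinomial_succ_succ, add_smul, qBinomial_zero_right, one_smul, pow_zero, one_mul,
      Nat.sub_zero, Nat.add_sub_add_right]

theorem add_pow_of_isPrimitiveRoot [IsDomain R] {M : ℕ} (h : y * x = ζ • (x * y))
    (hζ : IsPrimitiveRoot ζ M) (hM : 0 < M) : (x + y) ^ M = x ^ M + y ^ M := by
  rw [add_pow_eq_sum_qBinomial h, sum_range_succ, sum_eq_single_of_mem 0 (mem_range.mpr hM)]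
  · simp [add_comm]
  · intro k hk hk0
    rw [hζ.qBinomial_eq_zero (Nat.pos_of_ne_zero hk0) (mem_range.mp hk), zero_smul]

theorem one_add_smul_mul_pow_of_isPrimitiveRoot [IsDomain R] {M : ℕ} (h : y * x = ζ • (x * y))
    (hζ : IsPrimitiveRoot ζ M) (hM : 0 < M) (c : R) :
    ((1 + c • x) * y) ^ M = (1 + (c ^ M * ζ ^ M.choose 2) • x ^ M) * y ^ M := by
  have hcomm : y * (c • x * y) = ζ • (c • x * y * y) := by
    rw [smul_mul_assoc, smul_mul_assoc, mul_smul_comm, ← mul_assoc, h, smul_mul_assoc,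
      smul_comm]
  rw [add_mul, one_mul, add_comm, add_pow_of_isPrimitiveRoot hcomm hζ hM, smul_mul_assoc,
    smul_pow, mul_pow_of_mul_eq_smul h, smul_smul, add_mul, one_mul, smul_mul_assoc, add_comm]

theorem Commute.mul_mul_eq_smul {z : A} (hz : Commute z x) (h : y * x = ζ • (x * y)) :
    z * y * x = ζ • (x * (z * y)) := by
  rw [mul_assoc, h, mul_smul_comm, ← mul_assoc, hz.eq, mul_assoc]

theorem one_add_smul_mul_one_add_neg_smul (a : R) (z : A) :
    (1 + a • z) * (1 + (-a) • z) = 1 - a ^ 2 • z ^ 2 := by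
  rw [neg_smul, ← sub_eq_add_neg, ← (Commute.one_left _).mul_self_sub_mul_self_eq, one_mul,
    smul_mul_smul_comm, sq, sq]

end QuantumPlane

theorem pow_four_pow_choose_two {M : Type*} [Monoid M] (q : M) (n : ℕ) :
    (q ^ 4) ^ n.choose 2 = (q ^ (n + n)) ^ (n - 1) := by
  have h2 : 2 * n.choose 2 = n * (n - 1) := by
    rw [Nat.choose_two_right, Nat.mul_div_cancel' (Nat.even_mul_pred_self n).two_dvd]
  rw [← pow_mul, ← pow_mul, show (n + n) * (n - 1) = 2 * (n * (n - 1)) by ring, ← h2]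
  ring_nf

theorem quantum_binomial_even_case_general {A : Type*} [Ring A] [Algebra ℂ A]
    (N : ℕ) (hNeven : Even N) (hN : 0 < N) (q : ℂ)
    (hq : IsPrimitiveRoot (q ^ 2) N) (hqN : q ^ N = (-1 : ℂ))
    (X Xj : A)
    (hcomm : Xj * X = (q ^ 4) • (X * Xj)) :
    ((1 + q • X) * (1 + q ^ 3 • X) * Xj) ^ (N / 2)
        = (1 + ((-1 : ℂ) ^ ((N - 2) / 2) * q ^ (N / 2)) • X ^ (N / 2))
            * (1 + ((-1 : ℂ) ^ (N / 2) * q ^ (N / 2)) • X ^ (N / 2)) * Xj ^ (N / 2)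
      ∧ ((1 + q • X) * (1 + q ^ 3 • X) * Xj) ^ N = (1 + X ^ N) ^ 2 * Xj ^ N := by
  obtain ⟨M, rfl⟩ := hNeven
  have hM : 0 < M := by omega
  rw [show (M + M) / 2 = M by omega, show (M + M - 2) / 2 = M - 1 by omega, mul_assoc]
  have hζ : IsPrimitiveRoot (q ^ 4) M := by simpa [← pow_mul] using hq.pow hN (two_mul M).symm
  have hcoeff : (q ^ 4) ^ M.choose 2 = (-1) ^ (M - 1) := by rw [pow_four_pow_choose_two, hqN]
  have hsign : (-1 : ℂ) ^ M * q ^ M = -((-1) ^ (M - 1) * q ^ M) := by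
    rw [← pow_sub_one_mul hM.ne', mul_neg_one, neg_mul]
  have hU : ((1 + q ^ 3 • X) * Xj) ^ M = (1 + ((-1) ^ M * q ^ M) • X ^ M) * Xj ^ M := by
    rw [one_add_smul_mul_pow_of_isPrimitiveRoot hcomm hζ hM, hcoeff, hsign]
    congr 3
    linear_combination ((-1) ^ (M - 1) * q ^ M) * hqN
  have hX : Commute (1 + q ^ 3 • X) X :=
    (Commute.one_left X).add_left ((Commute.refl X).smul_left _)
  have hhalf : ((1 + q • X) * ((1 + q ^ 3 • X) * Xj)) ^ M
      = (1 + ((-1) ^ (M - 1) * q ^ M) • X ^ M) * (1 + ((-1) ^ M * q ^ M) • X ^ M) * Xj ^ M := by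
    rw [one_add_smul_mul_pow_of_isPrimitiveRoot (hX.mul_mul_eq_smul hcomm) hζ hM, hU, hcoeff,
      mul_comm (q ^ M), mul_assoc]
  refine ⟨hhalf, ?_⟩
  have hcentral : Commute (1 + X ^ (M + M)) (Xj ^ M) :=
    ((Commute.one_left _).add_left (commute_pow_of_pow_eq_one hcomm
      (by rw [pow_add, hζ.pow_eq_one, one_mul]))).pow_right M
  have ha : ((-1 : ℂ) ^ (M - 1) * q ^ M) ^ 2 = -1 := by
    rw [mul_pow, ← pow_mul, pow_mul', neg_one_sq, one_pow, one_mul, sq, ← pow_add, hqN]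
  rw [pow_add, hhalf, hsign, one_add_smul_mul_one_add_neg_smul, ha, neg_smul, one_smul,
    sub_neg_eq_add, ← pow_mul, mul_two, ← sq, hcentral.mul_pow, ← pow_mul, mul_two]

/-- Let `N` be even, `q ∈ ℂ*` with `q²` a primitive `N`-th root of unity and
`q^N = -1`, and let `X`, `X_j` be invertible elements of a `ℂ`-algebra with
`X_j X = q⁴ X X_j`.  Then
`((1+qX)(1+q³X)X_j)^(N/2) = (1 + (-1)^((N-2)/2) q^(N/2) X^(N/2)) (1 + (-1)^(N/2) q^(N/2) X^(N/2)) X_j^(N/2)`,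
and consequently `((1+qX)(1+q³X)X_j)^N = (1 + X^N)² X_j^N`. -/
theorem quantum_binomial_even_case {A : Type*} [Ring A] [Algebra ℂ A]
    (N : ℕ) (hNeven : Even N) (hN : 0 < N) (q : ℂ) (hq0 : q ≠ 0)
    (hq : IsPrimitiveRoot (q ^ 2) N) (hqN : q ^ N = (-1 : ℂ))
    (X Xj : A) (hX : IsUnit X) (hXj : IsUnit Xj)
    (hcomm : Xj * X = (q ^ 4) • (X * Xj)) :
    ((1 + q • X) * (1 + q ^ 3 • X) * Xj) ^ (N / 2)
        = (1 + ((-1 : ℂ) ^ ((N - 2) / 2) * q ^ (N / 2)) • X ^ (N / 2))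
            * (1 + ((-1 : ℂ) ^ (N / 2) * q ^ (N / 2)) • X ^ (N / 2)) * Xj ^ (N / 2)
      ∧ ((1 + q • X) * (1 + q ^ 3 • X) * Xj) ^ N = (1 + X ^ N) ^ 2 * Xj ^ N :=
  quantum_binomial_even_case_general N hNeven hN q hq hqN X Xj hcomm
end
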